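/- Let A ⊆ ℝ^a and B ⊆ ℝ^b be semialgebraic sets and let f : A → B be a continuous semialgebraic map that covers semialgebraic compacts. Then for every p ≥ 0 the map J(f) : J^p_f(A) → f(A) also covers semialgebraic compacts, in the sense that for every semialgebraic compact L ⊆ f(A) there exists a compact subset C ⊆ J^p_f(A) with J(f)(C) = L. -/

import Mathlib

open CategoryTheory

noncomputable section SingularHomology

/-- The singular chain complex functor: singular simplicial set, followed by the free abelian
group functor applied levelwise, followed by the alternating face map complex. -/
def singularChains : TopCat.{0} ⥤ ChainComplex Ab ℕ :=
  TopCat.toSSet ⋙ ((SimplicialObject.whiskering _ _).obj AddCommGrpCat.free) ⋙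
    AlgebraicTopology.alternatingFaceMapComplex Ab

/-- Singular homology with integer coefficients, as a functor `TopCat ⥤ Ab`. -/
def SH (i : ℕ) : TopCat.{0} ⥤ Ab :=
  singularChains ⋙ HomologicalComplex.homologyFunctor Ab _ i

/-- The homomorphism induced on `i`-th singular homology by a continuous map. -/
def SHmap (i : ℕ) {X Y : Type} [TopologicalSpace X] [TopologicalSpace Y]
    (g : C(X, Y)) : (SH i).obj (TopCat.of X) ⟶ (SH i).obj (TopCat.of Y) :=
  (SH i).map (TopCat.ofHom g)

/-- The `i`-th Betti number of a topological space: the rank of its `i`-th singular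
homology group with integer coefficients. -/
def betti (X : Type) [TopologicalSpace X] (i : ℕ) : ℕ :=
  Module.finrank ℤ ((SH i).obj (TopCat.of X))

/-- A continuous map is a `p`-equivalence if it induces isomorphisms on singular homology
in all degrees `i < p` and an epimorphism in degree `p`. -/
def IsPEquivalence (p : ℕ) {X Y : Type} [TopologicalSpace X] [TopologicalSpace Y]
    (g : C(X, Y)) : Prop :=
  (∀ i, i < p → Function.Bijective (SHmap i g)) ∧ Function.Surjective (SHmap p g)

end SingularHomology

/-- Basic semialgebraic sets: zero sets and (strict) positivity sets of real polynomials. -/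
def IsBasicSA {m : ℕ} (S : Set (Fin m → ℝ)) : Prop :=
  ∃ p : MvPolynomial (Fin m) ℝ,
    S = {x | MvPolynomial.eval x p = 0} ∨ S = {x | 0 < MvPolynomial.eval x p}

/-- A set is semialgebraic if it is a finite union of finite intersections of basic
semialgebraic sets. -/
def IsSemialgebraic {m : ℕ} (S : Set (Fin m → ℝ)) : Prop :=
  ∃ (N M : ℕ) (B : Fin N → Fin M → Set (Fin m → ℝ)),
    (∀ i j, IsBasicSA (B i j)) ∧ S = ⋃ i, ⋂ j, B i j

/-- A semialgebraic compact: a closed and bounded semialgebraic set. -/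
def IsSACompact {m : ℕ} (S : Set (Fin m → ℝ)) : Prop :=
  IsSemialgebraic S ∧ IsClosed S ∧ Bornology.IsBounded S

/-- A subset of a product `ℝ^a × ℝ^b` is semialgebraic if the corresponding subset of
`ℝ^{a+b}` is. -/
def IsSemialgebraicPair {a b : ℕ} (S : Set ((Fin a → ℝ) × (Fin b → ℝ))) : Prop :=
  IsSemialgebraic {z : Fin (a + b) → ℝ | ∃ w ∈ S, z = Fin.append w.1 w.2}

/-- A semialgebraic compact in a product `ℝ^a × ℝ^b`. -/
def IsSACompactPair {a b : ℕ} (S : Set ((Fin a → ℝ) × (Fin b → ℝ))) : Prop :=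
  IsSemialgebraicPair S ∧ IsClosed S ∧ Bornology.IsBounded S

/-- A subset of a triple product `ℝ^a × ℝ^b × ℝ^c` is semialgebraic if the corresponding
subset of `ℝ^{a+b+c}` is. -/
def IsSemialgebraicTriple {a b c : ℕ}
    (S : Set ((Fin a → ℝ) × (Fin b → ℝ) × (Fin c → ℝ))) : Prop :=
  IsSemialgebraic {z : Fin (a + b + c) → ℝ | ∃ w ∈ S, z = Fin.append (Fin.append w.1 w.2.1) w.2.2}

/-- A map `f : A → ℝ^b`, `A ⊆ ℝ^a`, is semialgebraic if its graph over `A` is a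
semialgebraic subset of `ℝ^{a+b}`. -/
def IsSemialgebraicMapOn {a b : ℕ} (A : Set (Fin a → ℝ)) (f : (Fin a → ℝ) → (Fin b → ℝ)) : Prop :=
  IsSemialgebraic {z : Fin (a + b) → ℝ | ∃ x ∈ A, z = Fin.append x (f x)}

/-- The unit sphere `S^n ⊆ ℝ^{n+1}`. -/
def unitSphere (n : ℕ) : Set (Fin (n + 1) → ℝ) := {x | ∑ i, x i ^ 2 = 1}

/-- The standard `p`-simplex `Δ^p ⊆ ℝ^{p+1}`. -/
def simplexΔ (p : ℕ) : Set (Fin (p + 1) → ℝ) := {t | (∀ i, 0 ≤ t i) ∧ ∑ i, t i = 1}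

section Join

variable {X : Type} [TopologicalSpace X] (p : ℕ)

/-- The relation defining the `(p+1)`-fold join: `(x,t) ∼ (x',t')` iff `t = t'` and
`x i = x' i` for every `i` with `t i ≠ 0`. -/
def joinRel (a b : (Fin (p + 1) → X) × (simplexΔ p)) : Prop :=
  a.2 = b.2 ∧ ∀ i, (a.2 : Fin (p + 1) → ℝ) i ≠ 0 → a.1 i = b.1 i

/-- The `(p+1)`-fold join `J^p(X)`, with the quotient topology. -/
def IteratedJoin (X : Type) [TopologicalSpace X] (p : ℕ) : Type :=
  Quot (joinRel (X := X) p)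

instance : TopologicalSpace (IteratedJoin X p) :=
  inferInstanceAs (TopologicalSpace (Quot _))

end Join

section JoinOverMap

variable {α β : Type} (A : Set α) (f : α → β) (p : ℕ)

/-- The `(p+1)`-fold fiber product `W^p_f(A)` of `A` over `f`. -/
def fiberW : Set (Fin (p + 1) → α) :=
  {x | (∀ i, x i ∈ A) ∧ ∀ i, f (x i) = f (x 0)}

/-- The relation defining the `(p+1)`-fold join over a map. -/
def joinOverRel (a b : (fiberW A f p) × (simplexΔ p)) : Prop :=
  a.2 = b.2 ∧ ∀ i, (a.2 : Fin (p + 1) → ℝ) i ≠ 0 → a.1.1 i = b.1.1 i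

/-- The `(p+1)`-fold join `J^p_f(A)` of `A` over `f`, with the quotient topology. -/
def JoinOverMap : Type _ :=
  Quot (joinOverRel A f p)

instance [TopologicalSpace α] : TopologicalSpace (JoinOverMap A f p) :=
  inferInstanceAs (TopologicalSpace (Quot _))

/-- The map `J(f) : J^p_f(A) → β`, sending the class of `(x₀,…,x_p,t)` to `f x₀`. -/
def joinMap : JoinOverMap A f p → β :=
  Quot.lift (fun a => f (a.1.1 0)) (by
    rintro ⟨x, t⟩ ⟨y, s⟩ ⟨h1, h2⟩
    obtain ⟨i, hi⟩ : ∃ i, (t : Fin (p + 1) → ℝ) i ≠ 0 := by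
      by_contra h
      push_neg at h
      have := t.2.2
      simp [h] at this
    have hx := x.2.2 i
    have hy := y.2.2 i
    dsimp only
    rw [← hx, h2 i hi, hy])

/-- The map `J(f)`, as a continuous map onto the image `f(A)`. -/
noncomputable def joinMapCM [TopologicalSpace α] [TopologicalSpace β]
    (hf : ContinuousOn f A) : C(JoinOverMap A f p, ↥(f '' A)) where
  toFun := Quot.lift
    (fun a => (⟨f (a.1.1 0), a.1.1 0, a.1.2.1 0, rfl⟩ : ↥(f '' A)))
    (by
      rintro ⟨x, t⟩ ⟨y, s⟩ ⟨h1, h2⟩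
      obtain ⟨i, hi⟩ : ∃ i, (t : Fin (p + 1) → ℝ) i ≠ 0 := by
        by_contra h
        push_neg at h
        have := t.2.2
        simp [h] at this
      apply Subtype.ext
      have hx := x.2.2 i
      have hy := y.2.2 i
      dsimp only
      rw [← hx, h2 i hi, hy])
  continuous_toFun := by
    apply continuous_quot_lift
    apply Continuous.subtype_mk
    have h0 : Continuous (fun a : (fiberW A f p) × (simplexΔ p) =>
        (⟨a.1.1 0, a.1.2.1 0⟩ : ↥A)) :=
      Continuous.subtype_mk ((continuous_apply 0).comp
        (continuous_subtype_val.comp continuous_fst)) _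
    exact hf.restrict.comp h0

end JoinOverMap

/-- If `f : A → B` is a continuous semialgebraic map covering semialgebraic
compacts, then `J(f) : J^p_f(A) → f(A)` also covers semialgebraic compacts: every
semialgebraic compact `L ⊆ f(A)` is the image under `J(f)` of a compact subset of `J^p_f(A)`. -/
theorem joinMap_covers_compacts {a b : ℕ} (A : Set (Fin a → ℝ)) (B : Set (Fin b → ℝ))
    (hA : IsSemialgebraic A) (hB : IsSemialgebraic B)
    (f : (Fin a → ℝ) → (Fin b → ℝ)) (hmap : Set.MapsTo f A B)
    (hcont : ContinuousOn f A) (hgraph : IsSemialgebraicMapOn A f)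
    (hcov : ∀ L, IsSACompact L → L ⊆ f '' A →
      ∃ K, IsSACompact K ∧ K ⊆ A ∧ f '' K = L)
    (p : ℕ) :
    ∀ L, IsSACompact L → L ⊆ f '' A →
      ∃ C : Set (JoinOverMap A f p), IsCompact C ∧ joinMap A f p '' C = L := by
  intro L hL hLA
  obtain ⟨K, hKsa, hKA, hKL⟩ := hcov L hL hLA
  have hKcomp : IsCompact K :=
    Metric.isCompact_of_isClosed_isBounded hKsa.2.1 hKsa.2.2
  have t0 : simplexΔ p := ⟨fun i => if i = 0 then 1 else 0, fun i => by positivity,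
    by simp⟩
  let φ : K → JoinOverMap A f p := fun y =>
    Quot.mk _ (⟨fun _ => y.1, fun _ => hKA y.2, fun _ => rfl⟩, t0)
  have hφ : Continuous φ := by
    apply (continuous_quot_mk).comp
    apply Continuous.prodMk
    · exact Continuous.subtype_mk (continuous_pi fun _ => continuous_subtype_val) _
    · exact continuous_const
  haveI : CompactSpace K := isCompact_iff_compactSpace.mp hKcomp
  refine ⟨Set.range φ, isCompact_range hφ, ?_⟩
  have : joinMap A f p '' Set.range φ = Set.range (fun y : K => f y.1) := by
    rw [← Set.range_comp]; rfl
  rw [this, ← hKL]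
  ext z
  constructor
  · rintro ⟨⟨y, hy⟩, rfl⟩; exact ⟨y, hy, rfl⟩
  · rintro ⟨y, hy, rfl⟩; exact ⟨⟨y, hy⟩, rfl⟩
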